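/- arXiv:math/0503499 — 2 statements merged into one kernel-verified Lean document; each statement's English description precedes it below -/
import Mathlib

section
/- Let ε ≠ 0 be a complex number and A ∈ {1, -1}. Suppose φ is a differentiable complex-valued function on an interval satisfying φ'(t) + A·(φ(t)² - ε²/4) = 0, with φ(t)² ≠ ε²/4 everywhere. Then there exists a constant ν such that φ(t) = (ε/2)·coth((A·ε/2)(t - ν)) for all t in the domain. -/
/-- The complex hyperbolic cotangent. -/
noncomputable def cth (z : ℂ) : ℂ := Complex.cosh z / Complex.sinh z

/-- The scalar ODE `φ' + A·(φ² - ε²/4) = 0` with `A = ±1`, `ε ≠ 0`, and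
`φ² ≠ ε²/4` everywhere on an interval has general solution
`φ(t) = (ε/2)·coth((A·ε/2)(t - ν))` for some constant `ν ∈ ℂ`. -/
theorem stmt_1 (a b : ℝ) (hab : a < b) (ε : ℂ) (hε : ε ≠ 0)
    (A : ℂ) (hA : A = 1 ∨ A = -1) (φ φ' : ℝ → ℂ)
    (hderiv : ∀ t ∈ Set.Ioo a b, HasDerivAt φ (φ' t) t)
    (hODE : ∀ t ∈ Set.Ioo a b, φ' t + A * ((φ t) ^ 2 - ε ^ 2 / 4) = 0)
    (hne : ∀ t ∈ Set.Ioo a b, (φ t) ^ 2 ≠ ε ^ 2 / 4) :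
    ∃ ν : ℂ, ∀ t ∈ Set.Ioo a b, φ t = (ε / 2) * cth ((A * ε / 2) * ((t : ℂ) - ν)) := by
  have hA0 : A ≠ 0 := by rcases hA with h | h <;> simp [h]
  have hAε : A * ε ≠ 0 := mul_ne_zero hA0 hε
  have hm : ∀ t ∈ Set.Ioo a b, φ t - ε / 2 ≠ 0 := by
    intro t ht h
    exact hne t ht (by linear_combination (φ t + ε / 2) * h)
  have hp : ∀ t ∈ Set.Ioo a b, φ t + ε / 2 ≠ 0 := by
    intro t ht h
    exact hne t ht (by linear_combination (φ t - ε / 2) * h)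
  set ψ : ℝ → ℂ := fun t => (φ t - ε / 2) / (φ t + ε / 2) with hψdef
  set g : ℝ → ℂ := fun t => ψ t * Complex.exp (A * ε * t) with hgdef
  -- derivative of g is zero
  have hg : ∀ t ∈ Set.Ioo a b, HasDerivAt g 0 t := by
    intro t ht
    have hp' := hp t ht
    have hφ' : φ' t = A * (ε ^ 2 / 4 - (φ t) ^ 2) := by linear_combination hODE t ht
    have h1 : HasDerivAt (fun s => φ s - ε / 2) (φ' t) t := (hderiv t ht).sub_const _
    have h2 : HasDerivAt (fun s => φ s + ε / 2) (φ' t) t := (hderiv t ht).add_const _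
    have hψd : HasDerivAt ψ
        ((φ' t * (φ t + ε / 2) - (φ t - ε / 2) * φ' t) / (φ t + ε / 2) ^ 2) t :=
      h1.div h2 hp'
    have hlin : HasDerivAt (fun z : ℂ => A * ε * z) (A * ε) (t : ℂ) := by
      simpa using (hasDerivAt_id (t : ℂ)).const_mul (A * ε)
    have hexpC : HasDerivAt (fun z : ℂ => Complex.exp (A * ε * z))
        (Complex.exp (A * ε * t) * (A * ε)) (t : ℂ) :=
      (Complex.hasDerivAt_exp (A * ε * t)).comp _ hlin
    have hexp : HasDerivAt (fun s : ℝ => Complex.exp (A * ε * s))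
        (Complex.exp (A * ε * t) * (A * ε)) t := hexpC.comp_ofReal
    have hmul := hψd.mul hexp
    have hz : (φ' t * (φ t + ε / 2) - (φ t - ε / 2) * φ' t) / (φ t + ε / 2) ^ 2 *
          Complex.exp (A * ε * t) +
        ψ t * (Complex.exp (A * ε * t) * (A * ε)) = 0 := by
      simp only [hψdef]
      rw [hφ', div_mul_eq_mul_div, div_mul_eq_mul_div,
        div_add_div _ _ (pow_ne_zero 2 hp') hp', div_eq_zero_iff]
      left; ring
    rw [hz] at hmul
    exact hmul
  -- g is constant on Ioo a b
  obtain ⟨t₀, ht₀⟩ : ∃ t₀, t₀ ∈ Set.Ioo a b := ⟨(a + b) / 2, by constructor <;> linarith⟩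
  have hconst : ∀ t ∈ Set.Ioo a b, g t = g t₀ := by
    intro t ht
    refine (convex_Ioo a b).is_const_of_fderivWithin_eq_zero (𝕜 := ℝ)
      (f := g) (fun s hs => ((hg s hs).differentiableAt).differentiableWithinAt)
      (fun s hs => ?_) ht ht₀
    rw [fderivWithin_of_isOpen isOpen_Ioo hs, (hg s hs).hasFDerivAt.fderiv]
    ext
    simp
  have hC : g t₀ ≠ 0 := by
    simp only [hgdef, hψdef]
    exact mul_ne_zero (div_ne_zero (hm t₀ ht₀) (hp t₀ ht₀)) (Complex.exp_ne_zero _)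
  set c : ℂ := Complex.log (g t₀) with hc
  have hec : Complex.exp c = g t₀ := Complex.exp_log hC
  refine ⟨c / (A * ε), fun t ht => ?_⟩
  have hψe : ψ t = Complex.exp (-(A * ε * ((t : ℂ) - c / (A * ε)))) := by
    have h1 : ψ t * Complex.exp (A * ε * t) = Complex.exp c := by
      rw [hec]; exact hconst t ht
    have h2 : A * ε * ((t : ℂ) - c / (A * ε)) = A * ε * t - c := by
      field_simp
    rw [h2, neg_sub, Complex.exp_sub, eq_div_iff (Complex.exp_ne_zero _), ← h1]
  set u : ℂ := A * ε / 2 * ((t : ℂ) - c / (A * ε)) with hu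
  have hψu : ψ t = Complex.exp (-(2 * u)) := by
    rw [hψe]; congr 1; rw [hu]; ring
  have he2u : Complex.exp (-(2 * u)) = Complex.exp (-u) * Complex.exp (-u) := by
    rw [← Complex.exp_add]; ring_nf
  have heu : Complex.exp u * Complex.exp (-u) = 1 := by
    rw [← Complex.exp_add]; simp
  have hψne1 : ψ t ≠ 1 := by
    intro h
    have h' := (div_eq_one_iff_eq (hp t ht)).mp h
    exact hε (by linear_combination -h')
  have hsinh : Complex.sinh u ≠ 0 := by
    intro h
    have h2 : Complex.exp u - Complex.exp (-u) = 0 := by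
      rw [← Complex.two_sinh, h, mul_zero]
    have hexp2 : Complex.exp u = Complex.exp (-u) := by linear_combination h2
    apply hψne1
    rw [hψu, he2u]
    calc Complex.exp (-u) * Complex.exp (-u)
        = Complex.exp u * Complex.exp (-u) := by rw [hexp2]
      _ = 1 := heu
  have hcross : φ t - ε / 2 = ψ t * (φ t + ε / 2) := by
    simp only [hψdef]
    exact (div_mul_cancel₀ _ (hp t ht)).symm
  rw [hψu, he2u] at hcross
  rw [cth, ← mul_div_assoc, eq_div_iff hsinh]
  have hs2 := Complex.two_sinh u
  have hc2 := Complex.two_cosh u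
  linear_combination (φ t / 2) * hs2 - (ε / 4) * hc2 + (Complex.exp u / 2) * hcross +
    (Complex.exp (-u) / 2) * (φ t + ε / 2) * heu
end

section
/- Suppose ν: X → ℂ is a function on a symmetric, addition-closed subset X of a root lattice spanned by simple roots, satisfying ν_{α+β} = ν_α + ν_β whenever α, β, α+β ∈ X, and ν_{-α} = -ν_α. If X is contained in the ℤ-span of a linearly independent set Γ in a finite-dimensional vector space h* with a nondegenerate pairing, then there exists ν ∈ h* such that ν_α = (α, ν) for all α ∈ X. -/
/-- An additive, negation-compatible function `ν` on a symmetric, addition-closed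
subset `X` of the `ℤ`-span of a linearly independent set `Γ` in a finite-dimensional
space `h*` with a nondegenerate pairing is realized by evaluation against a single
element: there is `v ∈ h*` with `ν_α = (α, v)` for all `α ∈ X`. -/
theorem stmt_8 (V : Type*) [AddCommGroup V] [Module ℂ V] [FiniteDimensional ℂ V]
    (B : V →ₗ[ℂ] V →ₗ[ℂ] ℂ)
    (hB : ∀ w : V, (∀ v : V, B v w = 0) → w = 0)
    (Γ : Set V) (hΓ : LinearIndependent ℂ (fun x : Γ => (x : V)))
    (X : Set V) (hXΓ : X ⊆ (Submodule.span ℤ Γ : Submodule ℤ V))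
    (hXadd : ∀ α ∈ X, ∀ β ∈ X, α + β ∈ X)
    (hXneg : ∀ α ∈ X, -α ∈ X)
    (ν : V → ℂ)
    (hνadd : ∀ α ∈ X, ∀ β ∈ X, ν (α + β) = ν α + ν β)
    (hνneg : ∀ α ∈ X, ν (-α) = -ν α) :
    ∃ v : V, ∀ α ∈ X, ν α = B α v := by
  rcases X.eq_empty_or_nonempty with hX | ⟨α₀, hα₀⟩
  · exact ⟨0, by simp [hX]⟩
  have h0X : (0 : V) ∈ X := by
    have := hXadd α₀ hα₀ (-α₀) (hXneg α₀ hα₀)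
    simpa using this
  have hν0 : ν 0 = 0 := by
    have := hνadd 0 h0X 0 h0X
    simpa using this.symm
  -- `X` is an additive subgroup of `V`
  let G : AddSubgroup V :=
    { carrier := X
      add_mem' := fun ha hb => hXadd _ ha _ hb
      zero_mem' := h0X
      neg_mem' := fun ha => hXneg _ ha }
  -- `ν` gives an additive hom `G →+ ℂ`
  let g0 : G →+ ℂ :=
    { toFun := fun a => ν a
      map_zero' := hν0
      map_add' := fun a b => hνadd a a.2 b b.2 }
  -- extend to an additive hom `g : V →+ ℂ` using that `ℂ` is divisible
  obtain ⟨g, hg⟩ := (Module.Baer.of_divisible ℂ).extension_property_addMonoidHom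
      G.subtype Subtype.coe_injective g0
  have hgX : ∀ α ∈ X, g α = ν α := by
    intro α hα
    have := DFunLike.congr_fun hg (⟨α, hα⟩ : G)
    simpa [g0] using this
  -- extend `Γ` to a basis and define a `ℂ`-linear `F` agreeing with `g` on `Γ`
  let b := Module.Basis.extend hΓ
  let F : V →ₗ[ℂ] ℂ := b.constr ℂ (fun i => g (i : V))
  have hFΓ : ∀ γ ∈ Γ, F γ = g γ := by
    intro γ hγ
    have hγ' : γ ∈ LinearIndepOn.extend (v := id) hΓ (Set.subset_univ Γ) := LinearIndepOn.subset_extend (v := id) hΓ _ hγ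
    have hb : b ⟨γ, hγ'⟩ = γ := Module.Basis.extend_apply_self hΓ ⟨γ, hγ'⟩
    calc F γ = F (b ⟨γ, hγ'⟩) := by rw [hb]
      _ = g γ := b.constr_basis ℂ (fun i => g (i : V)) ⟨γ, hγ'⟩
  -- `F` and `g` agree on the `ℤ`-span of `Γ`, hence on `X`
  have hspan : ∀ x ∈ (Submodule.span ℤ Γ : Submodule ℤ V), F x = g x := by
    intro x hx
    induction hx using Submodule.span_induction with
    | mem x hx => exact hFΓ x hx
    | zero => simp
    | add x y _ _ hx hy => simp [map_add, hx, hy]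
    | smul n x _ hx =>
        rw [map_zsmul, map_zsmul, hx]
  -- nondegeneracy: `B.flip` is injective, hence surjective onto the dual
  have hinj : Function.Injective (B.flip) := by
    rw [← LinearMap.ker_eq_bot]
    rw [LinearMap.ker_eq_bot']
    intro w hw
    exact hB w fun v => DFunLike.congr_fun hw v
  have hsurj : Function.Surjective (B.flip) :=
    (LinearMap.injective_iff_surjective_of_finrank_eq_finrank
      (Subspace.dual_finrank_eq (K := ℂ) (V := V)).symm).mp hinj
  obtain ⟨v, hv⟩ := hsurj F
  refine ⟨v, fun α hα => ?_⟩
  have h1 : F α = g α := hspan α (hXΓ hα)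
  have h2 : B α v = F α := by
    rw [← hv]; rfl
  rw [h2, h1, hgX α hα]
end
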